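/- For all ξ = (ξ₁,ξ₂,ξ₃), η = (η₁,η₂,η₃) ∈ ℝ³ with η₁ ≠ 0, η₂² + η₃² ≠ 0 and 3η₁² − η₂² − η₃² ≠ 0, the following identity holds: ξ₁ = ( 4η₁³(η₂²+η₃²) / (3(η₁²+η₂²+η₃²)(3η₁²−η₂²−η₃²)²) ) · N₃(ξ,η), where N₃(ξ,η) := ((3η₁²+η₂²+η₃²)/η₁²)(∂_{η₁}φ + 2N₁ − N₂) − ((9η₁⁴ + 18η₁²(η₂²+η₃²) + (η₂²+η₃²)²)/(4η₁³(η₂²+η₃²))) ( 2(ξ₁−η₁)N₁ − η₂∂_{η₂}φ − η₃∂_{η₃}φ ). -/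

import Mathlib

noncomputable section

/-- The resonance function φ(ξ,η) = ξ₁|ξ|² − (ξ₁−η₁)|ξ−η|² − η₁|η|². -/
def phiZK (ξ₁ ξ₂ ξ₃ η₁ η₂ η₃ : ℝ) : ℝ :=
  ξ₁ * (ξ₁ ^ 2 + ξ₂ ^ 2 + ξ₃ ^ 2)
    - (ξ₁ - η₁) * ((ξ₁ - η₁) ^ 2 + (ξ₂ - η₂) ^ 2 + (ξ₃ - η₃) ^ 2)
    - η₁ * (η₁ ^ 2 + η₂ ^ 2 + η₃ ^ 2)

/-- ∂_{η₁}φ = 3ξ₁²+ξ₂²+ξ₃²−6ξ₁η₁−2ξ₂η₂−2ξ₃η₃. -/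
def dphi1 (ξ₁ ξ₂ ξ₃ η₁ η₂ η₃ : ℝ) : ℝ :=
  3 * ξ₁ ^ 2 + ξ₂ ^ 2 + ξ₃ ^ 2 - 6 * ξ₁ * η₁ - 2 * ξ₂ * η₂ - 2 * ξ₃ * η₃

/-- ∂_{η₂}φ = 2ξ₁ξ₂−2ξ₁η₂−2η₁ξ₂. -/
def dphi2 (ξ₁ ξ₂ _ξ₃ η₁ η₂ _η₃ : ℝ) : ℝ :=
  2 * ξ₁ * ξ₂ - 2 * ξ₁ * η₂ - 2 * η₁ * ξ₂

/-- ∂_{η₃}φ = 2ξ₁ξ₃−2ξ₁η₃−2η₁ξ₃. -/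
def dphi3 (ξ₁ _ξ₂ ξ₃ η₁ _η₂ η₃ : ℝ) : ℝ :=
  2 * ξ₁ * ξ₃ - 2 * ξ₁ * η₃ - 2 * η₁ * ξ₃

/-- N₁(ξ,η) = (1/(2η₁))(φ − η·∇_ηφ). -/
def N1ZK (ξ₁ ξ₂ ξ₃ η₁ η₂ η₃ : ℝ) : ℝ :=
  (1 / (2 * η₁)) *
    (phiZK ξ₁ ξ₂ ξ₃ η₁ η₂ η₃
      - η₁ * dphi1 ξ₁ ξ₂ ξ₃ η₁ η₂ η₃
      - η₂ * dphi2 ξ₁ ξ₂ ξ₃ η₁ η₂ η₃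
      - η₃ * dphi3 ξ₁ ξ₂ ξ₃ η₁ η₂ η₃)

/-- The quantity N₂(ξ,η) from the space-time resonance decomposition. -/
def N2ZK (ξ₁ ξ₂ ξ₃ η₁ η₂ η₃ : ℝ) : ℝ :=
  (1 / (4 * η₁ ^ 2 * (η₂ ^ 2 + η₃ ^ 2))) *
    ((-(3 * η₁ ^ 2 + η₂ ^ 2 + η₃ ^ 2) * ξ₁ + 2 * η₁ * η₂ * ξ₂ + 2 * η₁ * η₃ * ξ₃)
        * phiZK ξ₁ ξ₂ ξ₃ η₁ η₂ η₃
      + ((3 * η₁ ^ 2 + η₂ ^ 2 + η₃ ^ 2) * ξ₁ - 2 * η₁ * η₂ * ξ₂ - 2 * η₁ * η₃ * ξ₃)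
        * (η₁ * dphi1 ξ₁ ξ₂ ξ₃ η₁ η₂ η₃)
      + (2 * η₁ * η₃ * ξ₂ * ξ₃ - 2 * η₁ * η₂ * ξ₃ ^ 2
          + (3 * η₁ ^ 2 + η₂ ^ 2 + η₃ ^ 2) * η₂ * ξ₁ - 2 * η₁ * (η₂ ^ 2 + η₃ ^ 2) * ξ₂)
        * dphi2 ξ₁ ξ₂ ξ₃ η₁ η₂ η₃
      + (-(2 * η₁ * η₃ * ξ₂ ^ 2) + 2 * η₁ * η₂ * ξ₂ * ξ₃
          + (3 * η₁ ^ 2 + η₂ ^ 2 + η₃ ^ 2) * η₃ * ξ₁ - 2 * η₁ * (η₂ ^ 2 + η₃ ^ 2) * ξ₃)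
        * dphi3 ξ₁ ξ₂ ξ₃ η₁ η₂ η₃)

/-- The quantity N₃(ξ,η) from the space-time resonance decomposition. -/
def N3ZK (ξ₁ ξ₂ ξ₃ η₁ η₂ η₃ : ℝ) : ℝ :=
  ((3 * η₁ ^ 2 + η₂ ^ 2 + η₃ ^ 2) / η₁ ^ 2)
      * (dphi1 ξ₁ ξ₂ ξ₃ η₁ η₂ η₃ + 2 * N1ZK ξ₁ ξ₂ ξ₃ η₁ η₂ η₃ - N2ZK ξ₁ ξ₂ ξ₃ η₁ η₂ η₃)
    - ((9 * η₁ ^ 4 + 18 * η₁ ^ 2 * (η₂ ^ 2 + η₃ ^ 2) + (η₂ ^ 2 + η₃ ^ 2) ^ 2)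
          / (4 * η₁ ^ 3 * (η₂ ^ 2 + η₃ ^ 2)))
      * (2 * (ξ₁ - η₁) * N1ZK ξ₁ ξ₂ ξ₃ η₁ η₂ η₃
          - η₂ * dphi2 ξ₁ ξ₂ ξ₃ η₁ η₂ η₃
          - η₃ * dphi3 ξ₁ ξ₂ ξ₃ η₁ η₂ η₃)

/-!
Both `N₁` and `N₂` have simple closed forms, and with them the `ξ₂, ξ₃`-dependence drops out of
the two brackets defining `N₃`: each is `ξ₁` times an affine function of `ξ₁`. The weight
`(9η₁⁴ + 18η₁²ρ + ρ²)/(4η₁³ρ)`, `ρ = η₂² + η₃²`, is exactly the one that cancels the `ξ₁²` terms,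
leaving `N₃ = 3|η|²(3η₁² − ρ)²/(4η₁³ρ) · ξ₁`.
-/

section

variable {ξ₁ ξ₂ ξ₃ η₁ η₂ η₃ : ℝ}

/-- `φ` has no part cubic in `η`, so `φ − η·∇_ηφ` is minus its quadratic part. -/
theorem phiZK_sub_euler :
    phiZK ξ₁ ξ₂ ξ₃ η₁ η₂ η₃ - η₁ * dphi1 ξ₁ ξ₂ ξ₃ η₁ η₂ η₃ - η₂ * dphi2 ξ₁ ξ₂ ξ₃ η₁ η₂ η₃
        - η₃ * dphi3 ξ₁ ξ₂ ξ₃ η₁ η₂ η₃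
      = (3 * η₁ ^ 2 + η₂ ^ 2 + η₃ ^ 2) * ξ₁ + 2 * η₁ * (η₂ * ξ₂ + η₃ * ξ₃) := by
  unfold phiZK dphi1 dphi2 dphi3
  ring

theorem N1ZK_eq (hη₁ : η₁ ≠ 0) :
    N1ZK ξ₁ ξ₂ ξ₃ η₁ η₂ η₃
      = (3 * η₁ ^ 2 + η₂ ^ 2 + η₃ ^ 2) * ξ₁ / (2 * η₁) + (η₂ * ξ₂ + η₃ * ξ₃) := by
  rw [N1ZK, phiZK_sub_euler]
  field_simp

theorem N2ZK_eq (hη₁ : η₁ ≠ 0) (h23 : η₂ ^ 2 + η₃ ^ 2 ≠ 0) :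
    N2ZK ξ₁ ξ₂ ξ₃ η₁ η₂ η₃
      = ξ₂ ^ 2 + ξ₃ ^ 2
        - ((3 * η₁ ^ 2 + η₂ ^ 2 + η₃ ^ 2) * ξ₁) ^ 2 / (4 * η₁ ^ 2 * (η₂ ^ 2 + η₃ ^ 2)) := by
  unfold N2ZK phiZK dphi1 dphi2 dphi3
  field_simp
  ring

theorem dphi1_add_two_mul_N1ZK_sub_N2ZK (hη₁ : η₁ ≠ 0) (h23 : η₂ ^ 2 + η₃ ^ 2 ≠ 0) :
    dphi1 ξ₁ ξ₂ ξ₃ η₁ η₂ η₃ + 2 * N1ZK ξ₁ ξ₂ ξ₃ η₁ η₂ η₃ - N2ZK ξ₁ ξ₂ ξ₃ η₁ η₂ η₃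
      = ξ₁ * ((3 + (3 * η₁ ^ 2 + η₂ ^ 2 + η₃ ^ 2) ^ 2 / (4 * η₁ ^ 2 * (η₂ ^ 2 + η₃ ^ 2))) * ξ₁
          - (3 * η₁ ^ 2 - η₂ ^ 2 - η₃ ^ 2) / η₁) := by
  rw [N1ZK_eq hη₁, N2ZK_eq hη₁ h23, dphi1]
  field_simp
  ring

theorem two_mul_sub_mul_N1ZK_sub_mul_dphi2_sub_mul_dphi3 (hη₁ : η₁ ≠ 0) :
    2 * (ξ₁ - η₁) * N1ZK ξ₁ ξ₂ ξ₃ η₁ η₂ η₃ - η₂ * dphi2 ξ₁ ξ₂ ξ₃ η₁ η₂ η₃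
        - η₃ * dphi3 ξ₁ ξ₂ ξ₃ η₁ η₂ η₃
      = ξ₁ * ((3 * η₁ ^ 2 + η₂ ^ 2 + η₃ ^ 2) / η₁ * ξ₁ - (3 * η₁ ^ 2 - η₂ ^ 2 - η₃ ^ 2)) := by
  rw [N1ZK_eq hη₁, dphi2, dphi3]
  field_simp
  ring

theorem N3ZK_eq (hη₁ : η₁ ≠ 0) (h23 : η₂ ^ 2 + η₃ ^ 2 ≠ 0) :
    N3ZK ξ₁ ξ₂ ξ₃ η₁ η₂ η₃
      = 3 * (η₁ ^ 2 + η₂ ^ 2 + η₃ ^ 2) * (3 * η₁ ^ 2 - η₂ ^ 2 - η₃ ^ 2) ^ 2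
          / (4 * η₁ ^ 3 * (η₂ ^ 2 + η₃ ^ 2)) * ξ₁ := by
  rw [N3ZK, dphi1_add_two_mul_N1ZK_sub_N2ZK hη₁ h23,
    two_mul_sub_mul_N1ZK_sub_mul_dphi2_sub_mul_dphi3 hη₁]
  field_simp
  ring

end

/-- ξ₁ = (4η₁³(η₂²+η₃²)/(3(η₁²+η₂²+η₃²)(3η₁²−η₂²−η₃²)²))·N₃(ξ,η). -/
theorem xi1_resolution (ξ₁ ξ₂ ξ₃ η₁ η₂ η₃ : ℝ) (hη₁ : η₁ ≠ 0)
    (h23 : η₂ ^ 2 + η₃ ^ 2 ≠ 0) (hcone : 3 * η₁ ^ 2 - η₂ ^ 2 - η₃ ^ 2 ≠ 0) :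
    ξ₁ = (4 * η₁ ^ 3 * (η₂ ^ 2 + η₃ ^ 2)
            / (3 * (η₁ ^ 2 + η₂ ^ 2 + η₃ ^ 2) * (3 * η₁ ^ 2 - η₂ ^ 2 - η₃ ^ 2) ^ 2))
          * N3ZK ξ₁ ξ₂ ξ₃ η₁ η₂ η₃ := by
  have hden : 3 * (η₁ ^ 2 + η₂ ^ 2 + η₃ ^ 2) * (3 * η₁ ^ 2 - η₂ ^ 2 - η₃ ^ 2) ^ 2 ≠ 0 :=
    mul_ne_zero (by positivity) (pow_ne_zero 2 hcone)
  have hnum : 4 * η₁ ^ 3 * (η₂ ^ 2 + η₃ ^ 2) ≠ 0 := by positivity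
  rw [N3ZK_eq hη₁ h23, ← mul_assoc, div_mul_div_cancel₀ hden, div_self hnum, one_mul]
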